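/- Union bound for unique shortest paths with random edge weights: let G = (V, E) be a graph on n vertices whose edge weights are independent random variables, each drawn from a discrete distribution whose maximum point mass is at most n^{-5}. Then with probability at least 1 − 1/n, for every pair (s,t) and every two distinct neighbors u, v of s, w(s,u) + dist(u,t) ≠ w(s,v) + dist(v,t), where dist is the shortest-path distance. -/

import Mathlib

open MeasureTheory ProbabilityTheory

/-- Cost of a walk given as a list of vertices: sum of edge weights of consecutive pairs. -/
def walkCost {V : Type*} (w : V → V → ℝ) : List V → ℝ
  | [] => 0
  | [_] => 0
  | a :: b :: rest => w a b + walkCost w (b :: rest)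

/-- `IsWalk E s t l` : `l` is a walk from `s` to `t` using edges of `E`. -/
def IsWalk {V : Type*} (E : V → V → Prop) (s t : V) : List V → Prop
  | [] => False
  | [a] => a = s ∧ a = t
  | a :: b :: rest => a = s ∧ E a b ∧ IsWalk E b t (b :: rest)

/-- Shortest-path distance: infimum of costs of walks from `s` to `t`. -/
noncomputable def gDist {V : Type*} (E : V → V → Prop) (w : V → V → ℝ) (s t : V) : ℝ :=
  sInf (walkCost w '' {l | IsWalk E s t l})

/-!
Fix every weight except the weight `y` of the edge `sv`. If all weights reachable from `u` are
nonnegative and `w(s, u) > 0`, then `y + dist(v, t) - dist(u, t)` takes the value `w(s, u)` for at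
most one `y`, as a shortest `u`–`t` walk shows by how it crosses `sv`, if at all. In the
degenerate cases (`t` unreachable, or a reachable negative edge, where `gDist` is the junk value
`0` of `sInf`) a tie forces `y = w(s, u)`. By independence, a tie then has probability at most the
largest point mass of `w(s, v)`. Ties with `w(s, u) = 0` are covered by the event `w(s, u) = 0`,
and a union bound over `n⁴` events of probability at most `n⁻⁵` each gives the claim.
-/

open Relation
open scoped ENNReal

theorem List.exists_eq_append_cons_append_cons_of_not_nodup {α : Type*} {l : List α}
    (h : ¬ l.Nodup) : ∃ (p : List α) (c : α) (m r : List α), l = p ++ c :: (m ++ c :: r) := by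
  induction l with
  | nil => exact absurd List.nodup_nil h
  | cons x xs ih =>
    by_cases hx : x ∈ xs
    · obtain ⟨m, r, rfl⟩ := List.append_of_mem hx
      exact ⟨[], x, m, r, rfl⟩
    · obtain ⟨p, c, m, r, rfl⟩ := ih fun hnd => h (List.nodup_cons.2 ⟨hx, hnd⟩)
      exact ⟨x :: p, c, m, r, rfl⟩

section Walks

variable {V : Type*} {E : V → V → Prop} {w : V → V → ℝ}

theorem IsWalk.exists_eq_cons {s t : V} {l : List V} (h : IsWalk E s t l) :
    ∃ l', l = s :: l' := by
  match l, h with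
  | [_], h => exact ⟨[], by rw [h.1]⟩
  | _ :: _ :: _, h => exact ⟨_, by rw [h.1]⟩

theorem IsWalk.exists_eq_concat {s t : V} {l : List V} (h : IsWalk E s t l) :
    ∃ l', l = l' ++ [t] := by
  induction l generalizing s with
  | nil => exact h.elim
  | cons a l ih =>
    match l, h with
    | [], h => exact ⟨[], by rw [h.2]; rfl⟩
    | b :: r, h =>
      obtain ⟨m, hm⟩ := ih h.2.2
      exact ⟨a :: m, by rw [List.cons_append, ← hm]⟩

theorem walkCost_append_cons (w : V → V → ℝ) (a : V) (l₁ l₂ : List V) :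
    walkCost w (l₁ ++ a :: l₂) = walkCost w (l₁ ++ [a]) + walkCost w (a :: l₂) := by
  induction l₁ with
  | nil => simp [walkCost]
  | cons c l₁ ih =>
    match l₁, ih with
    | [], _ => simp [walkCost]
    | d :: r, ih =>
      simp only [List.cons_append] at ih ⊢
      rw [walkCost, walkCost, ih, add_assoc]

theorem isWalk_append_cons {s t : V} (a : V) (l₁ l₂ : List V) :
    IsWalk E s t (l₁ ++ a :: l₂) ↔ IsWalk E s a (l₁ ++ [a]) ∧ IsWalk E a t (a :: l₂) := by
  induction l₁ generalizing s with
  | nil => cases l₂ <;> simp only [List.nil_append, IsWalk] <;> tauto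
  | cons c l₁ ih =>
    rcases l₁ with _ | ⟨d, r⟩
    · cases l₂ <;> simp only [List.cons_append, List.nil_append, IsWalk] <;> tauto
    · simp only [List.cons_append] at ih ⊢
      rw [IsWalk, IsWalk, ih]
      tauto

theorem IsWalk.append {a b c : V} {l₁ l₂ : List V} (h₁ : IsWalk E a b l₁)
    (h₂ : IsWalk E b c l₂) :
    ∃ l, IsWalk E a c l ∧ walkCost w l = walkCost w l₁ + walkCost w l₂ := by
  obtain ⟨p, rfl⟩ := h₁.exists_eq_concat
  obtain ⟨r, rfl⟩ := h₂.exists_eq_cons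
  exact ⟨p ++ b :: r, (isWalk_append_cons b p r).2 ⟨h₁, h₂⟩, walkCost_append_cons w b p r⟩

theorem IsWalk.reflTransGen {a b : V} {l : List V} (h : IsWalk E a b l) :
    ReflTransGen E a b := by
  induction l generalizing a with
  | nil => exact h.elim
  | cons x l ih =>
    rcases l with _ | ⟨y, l⟩
    · exact h.1 ▸ h.2 ▸ ReflTransGen.refl
    · exact h.1 ▸ ReflTransGen.head h.2.1 (ih h.2.2)

theorem Relation.ReflTransGen.exists_isWalk {a b : V} (h : ReflTransGen E a b) :
    ∃ l, IsWalk E a b l := by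
  induction h using ReflTransGen.head_induction_on with
  | refl => exact ⟨[b], rfl, rfl⟩
  | head hac _ ih =>
    obtain ⟨l, hl⟩ := ih
    obtain ⟨l', rfl⟩ := hl.exists_eq_cons
    exact ⟨_ :: _ :: l', rfl, hac, hl⟩

theorem walkCost_congr {w' : V → V → ℝ} {l : List V}
    (h : ∀ a b, [a, b] <:+: l → w a b = w' a b) : walkCost w l = walkCost w' l := by
  induction l with
  | nil => rfl
  | cons a l ih =>
    match l, h, ih with
    | [], _, _ => rfl
    | b :: r, h, ih =>
      rw [walkCost, walkCost, h a b ⟨[], r, rfl⟩,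
        ih fun c d hcd => h c d (hcd.trans (List.suffix_cons a _).isInfix)]

end Walks

section Distance

variable {V : Type*} {E : V → V → Prop} {w w' : V → V → ℝ} {u a t : V}

def NonnegReachable (E : V → V → Prop) (w : V → V → ℝ) (u : V) : Prop :=
  ∀ a b, E a b → ReflTransGen E u a → 0 ≤ w a b

theorem NonnegReachable.mono (hw : NonnegReachable E w u) (hle : ∀ a b, w a b ≤ w' a b) :
    NonnegReachable E w' u :=
  fun a b hab hua => (hw a b hab hua).trans (hle a b)

theorem walkCost_mono (hle : ∀ a b, w a b ≤ w' a b) (l : List V) :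
    walkCost w l ≤ walkCost w' l := by
  induction l with
  | nil => exact le_rfl
  | cons a l ih =>
    rcases l with _ | ⟨b, r⟩
    · exact le_rfl
    · exact add_le_add (hle a b) ih

theorem walkCost_nonneg (hw : NonnegReachable E w u) {l : List V} (hua : ReflTransGen E u a)
    (hl : IsWalk E a t l) : 0 ≤ walkCost w l := by
  induction l generalizing a with
  | nil => exact le_rfl
  | cons x l ih =>
    rcases l with _ | ⟨y, r⟩
    · exact le_rfl
    · obtain ⟨rfl, hxy, hl⟩ := hl
      exact add_nonneg (hw x y hxy hua) (ih (hua.tail hxy) hl)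

/-- Cutting out closed subwalks, whose costs are nonnegative. -/
theorem exists_nodup_isWalk_walkCost_le (hw : NonnegReachable E w u) {l : List V}
    (hua : ReflTransGen E u a) (hl : IsWalk E a t l) :
    ∃ l', IsWalk E a t l' ∧ l'.Nodup ∧ walkCost w l' ≤ walkCost w l := by
  induction hlen : l.length using Nat.strong_induction_on generalizing l with
  | _ N ih =>
  by_cases hnd : l.Nodup
  · exact ⟨l, hl, hnd, le_rfl⟩
  obtain ⟨p, c, m, r, rfl⟩ := List.exists_eq_append_cons_append_cons_of_not_nodup hnd
  obtain ⟨hac, hct⟩ := (isWalk_append_cons c p _).1 hl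
  obtain ⟨hcc, hct⟩ := (isWalk_append_cons c (c :: m) r).1 hct
  have hloop : 0 ≤ walkCost w ((c :: m) ++ [c]) :=
    walkCost_nonneg hw (hua.trans hac.reflTransGen) hcc
  obtain ⟨l', hl', hnd', hcost⟩ := ih (p ++ c :: r).length
    (by subst hlen; simp) ((isWalk_append_cons c p r).2 ⟨hac, hct⟩) rfl
  refine ⟨l', hl', hnd', hcost.trans ?_⟩
  have hshort := walkCost_append_cons w c p r
  have hlong := walkCost_append_cons w c p (m ++ c :: r)
  have hcycle := walkCost_append_cons w c (c :: m) r
  rw [List.cons_append] at hcycle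
  linarith

theorem gDist_eq_zero_of_not_reflTransGen (h : ¬ ReflTransGen E a t) : gDist E w a t = 0 := by
  have hempty : {l | IsWalk E a t l} = ∅ :=
    Set.eq_empty_of_forall_notMem fun l hl => h hl.reflTransGen
  rw [gDist, hempty, Set.image_empty, Real.sInf_empty]

theorem gDist_le_walkCost (hw : NonnegReachable E w u) (hua : ReflTransGen E u a) {l : List V}
    (hl : IsWalk E a t l) : gDist E w a t ≤ walkCost w l :=
  csInf_le ⟨0, by rintro _ ⟨l, hl, rfl⟩; exact walkCost_nonneg hw hua hl⟩ ⟨l, hl, rfl⟩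

theorem gDist_le_walkCost_add_gDist (hw : NonnegReachable E w u) (hua : ReflTransGen E u a)
    {b : V} (hbt : ReflTransGen E b t) {l : List V} (hl : IsWalk E a b l) :
    gDist E w a t ≤ walkCost w l + gDist E w b t := by
  obtain ⟨m₀, hm₀⟩ := hbt.exists_isWalk
  rw [← sub_le_iff_le_add']
  refine le_csInf ⟨_, m₀, hm₀, rfl⟩ ?_
  rintro _ ⟨m, hm, rfl⟩
  obtain ⟨lm, hlm, hcost⟩ := hl.append (w := w) hm
  linarith [gDist_le_walkCost hw hua hlm]

theorem gDist_mono (hw : NonnegReachable E w u) (hua : ReflTransGen E u a)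
    (hle : ∀ a b, w a b ≤ w' a b) : gDist E w a t ≤ gDist E w' a t := by
  by_cases hat : ReflTransGen E a t
  · obtain ⟨l₀, hl₀⟩ := hat.exists_isWalk
    refine le_csInf ⟨_, l₀, hl₀, rfl⟩ ?_
    rintro _ ⟨l, hl, rfl⟩
    exact (gDist_le_walkCost hw hua hl).trans (walkCost_mono hle l)
  · rw [gDist_eq_zero_of_not_reflTransGen hat, gDist_eq_zero_of_not_reflTransGen hat]

theorem exists_nodup_isWalk_walkCost_eq_gDist [Finite V] (hw : NonnegReachable E w u)
    (hua : ReflTransGen E u a) (hat : ReflTransGen E a t) :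
    ∃ l, IsWalk E a t l ∧ l.Nodup ∧ walkCost w l = gDist E w a t := by
  have := Fintype.ofFinite V
  have hfin : {l : List V | IsWalk E a t l ∧ l.Nodup}.Finite :=
    (List.finite_length_le V (Fintype.card V)).subset fun _ hl => hl.2.length_le_card
  obtain ⟨l₀, hl₀⟩ := hat.exists_isWalk
  obtain ⟨l₁, hl₁, hnd₁, -⟩ := exists_nodup_isWalk_walkCost_le hw hua hl₀
  obtain ⟨l, ⟨hl, hnd⟩, hmin⟩ := Set.exists_min_image _ (walkCost w) hfin ⟨l₁, hl₁, hnd₁⟩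
  refine ⟨l, hl, hnd, le_antisymm ?_ (gDist_le_walkCost hw hua hl)⟩
  refine le_csInf ⟨_, l₀, hl₀, rfl⟩ ?_
  rintro _ ⟨l', hl', rfl⟩
  obtain ⟨l'', hl'', hnd'', hle⟩ := exists_nodup_isWalk_walkCost_le hw hua hl'
  exact (hmin l'' ⟨hl'', hnd''⟩).trans hle

end Distance

/-- A reachable edge of negative weight can be traversed back and forth arbitrarily often,
so the costs of walks are unbounded below and `sInf` takes its junk value `0`. -/
theorem gDist_eq_zero_of_neg {V : Type*} {E : V → V → Prop} {w : V → V → ℝ} {a t p q : V}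
    (hE : ∀ a b, E a b → E b a) (hw : ∀ a b, w a b = w b a) (hat : ReflTransGen E a t)
    (hap : ReflTransGen E a p) (hpq : E p q) (hneg : w p q < 0) : gDist E w a t = 0 := by
  have : Std.Symm E := ⟨hE⟩
  have hloop : ∀ k : ℕ, ∃ l, IsWalk E p p l ∧ walkCost w l = k * (2 * w p q) := by
    intro k
    induction k with
    | zero => exact ⟨[p], ⟨rfl, rfl⟩, by simp [walkCost]⟩
    | succ k ih =>
      obtain ⟨l, hl, hcost⟩ := ih
      obtain ⟨l', rfl⟩ := hl.exists_eq_cons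
      refine ⟨p :: q :: p :: l', ⟨rfl, hpq, rfl, hE p q hpq, hl⟩, ?_⟩
      rw [walkCost, walkCost, hcost, hw q p]
      push_cast
      ring
  obtain ⟨l₁, hl₁⟩ := hap.exists_isWalk
  obtain ⟨l₂, hl₂⟩ := ((symm hap : ReflTransGen E p a).trans hat).exists_isWalk
  refine Real.sInf_of_not_bddBelow fun ⟨L, hL⟩ => ?_
  obtain ⟨k, hk⟩ := exists_nat_gt ((walkCost w l₁ + walkCost w l₂ - L) / (-(2 * w p q)))
  obtain ⟨lk, hlk, hcost⟩ := hloop k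
  obtain ⟨m, hm, hcm⟩ := hl₁.append (w := w) hlk
  obtain ⟨m', hm', hcm'⟩ := hm.append (w := w) hl₂
  have hLm := hL ⟨m', hm', rfl⟩
  rw [div_lt_iff₀ (by linarith)] at hk
  linarith

def IsTie {V : Type*} (E : V → V → Prop) (g : Sym2 V → ℝ) (s t u v : V) : Prop :=
  g s(s, u) + gDist E (fun a b => g s(a, b)) u t = g s(s, v) + gDist E (fun a b => g s(a, b)) v t

section Ties

open Function

variable {V : Type*} [DecidableEq V] {E : V → V → Prop} {g : Sym2 V → ℝ} {s t u v : V}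

theorem walkCost_update_of_not_infix {l : List V} (hsv : ¬ [s, v] <:+: l)
    (hvs : ¬ [v, s] <:+: l) (y y' : ℝ) :
    walkCost (fun a b => update g s(s, v) y s(a, b)) l =
      walkCost (fun a b => update g s(s, v) y' s(a, b)) l := by
  refine walkCost_congr fun a b hab => ?_
  have he : s(a, b) ≠ s(s, v) := by
    intro he
    rcases Sym2.eq_iff.1 he with ⟨rfl, rfl⟩ | ⟨rfl, rfl⟩
    exacts [hsv hab, hvs hab]
  simp only [update_of_ne he]

/-- Take a shortest walk from `u` to `t` for the weight `y₁`. If it avoids the edge `sv`, then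
`dist(u, t)` does not grow from `y₁` to `y₂`; if it crosses the edge from `s` to `v`, it costs at
least `y₁ + dist(v, t) = g s(s, u) + dist(u, t) > dist(u, t)`; if it crosses from `v` to `s`, then
`dist(u, t)` grows at most as much as `dist(v, t)`. Each case is incompatible with two ties. -/
theorem false_of_isTie_update_of_lt [Finite V] (hE : ∀ a b, E a b → E b a) (hsu : E s u)
    (hsv : E s v) (huv : u ≠ v) (hut : ReflTransGen E u t) {y₁ y₂ : ℝ}
    (hnn : NonnegReachable E (fun a b => update g s(s, v) y₁ s(a, b)) u)
    (hx : 0 < g s(s, u)) (hy : y₁ < y₂) (h₁ : IsTie E (update g s(s, v) y₁) s t u v)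
    (h₂ : IsTie E (update g s(s, v) y₂) s t u v) : False := by
  have hne : s(s, u) ≠ s(s, v) := fun h => huv (Sym2.congr_right.1 h)
  simp only [IsTie, update_of_ne hne, update_self] at h₁ h₂
  set w₁ : V → V → ℝ := fun a b => update g s(s, v) y₁ s(a, b)
  set w₂ : V → V → ℝ := fun a b => update g s(s, v) y₂ s(a, b)
  have hw₁₂ : ∀ a b, w₁ a b ≤ w₂ a b := fun a b => update_le_update_iff'.2 hy.le _
  have hnn₂ : NonnegReachable E w₂ u := hnn.mono hw₁₂
  have hw₁sv : w₁ s v = y₁ := update_self ..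
  have hw₁vs : w₁ v s = y₁ := by simp [w₁, Sym2.eq_swap]
  have hus : ReflTransGen E u s := .single (hE s u hsu)
  have hreach_uv : ReflTransGen E u v := hus.tail hsv
  have hvt : ReflTransGen E v t := (hut.head hsu).head (hE s v hsv)
  have hv₁₂ : gDist E w₁ v t ≤ gDist E w₂ v t := gDist_mono hnn hreach_uv hw₁₂
  obtain ⟨P, hP, hPnd, hPcost⟩ := exists_nodup_isWalk_walkCost_eq_gDist hnn .refl hut
  by_cases hsvP : [s, v] <:+: P
  · obtain ⟨p, m, rfl⟩ := hsvP
    rw [List.append_assoc, List.cons_append, List.singleton_append] at hP hPcost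
    obtain ⟨hpre, hsuf⟩ := (isWalk_append_cons s p (v :: m)).1 hP
    rw [walkCost_append_cons, walkCost, hw₁sv] at hPcost
    linarith [walkCost_nonneg hnn .refl hpre, gDist_le_walkCost hnn hreach_uv hsuf.2.2]
  by_cases hvsP : [v, s] <:+: P
  · obtain ⟨p, m, rfl⟩ := hvsP
    rw [List.append_assoc, List.cons_append, List.singleton_append] at hP hPcost
    obtain ⟨hpre, hsuf⟩ := (isWalk_append_cons v p (s :: m)).1 hP
    rw [walkCost_append_cons, walkCost, hw₁vs] at hPcost
    have hs : s ∉ p ++ [v] := by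
      rw [show p ++ [v, s] ++ m = (p ++ [v]) ++ s :: m by simp] at hPnd
      exact fun hs => List.nodup_append.1 hPnd |>.2.2 s hs s List.mem_cons_self rfl
    have hpre₁₂ : walkCost w₂ (p ++ [v]) = walkCost w₁ (p ++ [v]) :=
      walkCost_update_of_not_infix (fun h => hs (h.subset List.mem_cons_self))
        (fun h => hs (h.subset (by simp))) _ _
    have hvs := gDist_le_walkCost (t := t) hnn hreach_uv hsuf
    rw [walkCost, hw₁vs] at hvs
    linarith [gDist_le_walkCost_add_gDist hnn₂ .refl hvt hpre]
  · have hP₁₂ : walkCost w₂ P = walkCost w₁ P := walkCost_update_of_not_infix hsvP hvsP _ _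
    linarith [gDist_le_walkCost hnn₂ .refl hP]

theorem eq_of_isTie_update_of_gDist_eq_zero (huv : u ≠ v) {y : ℝ}
    (h : IsTie E (update g s(s, v) y) s t u v)
    (hu : gDist E (fun a b => update g s(s, v) y s(a, b)) u t = 0)
    (hv : gDist E (fun a b => update g s(s, v) y s(a, b)) v t = 0) : y = g s(s, u) := by
  have hne : s(s, u) ≠ s(s, v) := fun h => huv (Sym2.congr_right.1 h)
  simp only [IsTie, update_of_ne hne, update_self, hu, hv] at h
  linarith

theorem eq_of_isTie_update_of_neg (hE : ∀ a b, E a b → E b a) (hsu : E s u) (hsv : E s v)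
    (huv : u ≠ v) (hut : ReflTransGen E u t) {y : ℝ} (h : IsTie E (update g s(s, v) y) s t u v)
    {a b : V} (hab : E a b) (hua : ReflTransGen E u a) (hneg : update g s(s, v) y s(a, b) < 0) :
    y = g s(s, u) := by
  have hw : ∀ a b, update g s(s, v) y s(a, b) = update g s(s, v) y s(b, a) :=
    fun a b => by rw [Sym2.eq_swap (a := a)]
  have hvu : ReflTransGen E v u := (ReflTransGen.single (hE s v hsv)).tail hsu
  exact eq_of_isTie_update_of_gDist_eq_zero huv h (gDist_eq_zero_of_neg hE hw hut hua hab hneg)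
    (gDist_eq_zero_of_neg hE hw (hvu.trans hut) (hvu.trans hua) hab hneg)

theorem eq_of_isTie_update [Finite V] (hE : ∀ a b, E a b → E b a) (hsu : E s u) (hsv : E s v)
    (huv : u ≠ v) (hx : g s(s, u) ≠ 0) {y₁ y₂ : ℝ} (h₁ : IsTie E (update g s(s, v) y₁) s t u v)
    (h₂ : IsTie E (update g s(s, v) y₂) s t u v) : y₁ = y₂ := by
  have hne : s(s, u) ≠ s(s, v) := fun h => huv (Sym2.congr_right.1 h)
  have hus : ReflTransGen E u s := .single (hE s u hsu)
  by_cases hut : ReflTransGen E u t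
  swap
  · have hvt : ¬ ReflTransGen E v t := fun h => hut ((hus.tail hsv).trans h)
    rw [eq_of_isTie_update_of_gDist_eq_zero huv h₁ (gDist_eq_zero_of_not_reflTransGen hut)
        (gDist_eq_zero_of_not_reflTransGen hvt),
      eq_of_isTie_update_of_gDist_eq_zero huv h₂ (gDist_eq_zero_of_not_reflTransGen hut)
        (gDist_eq_zero_of_not_reflTransGen hvt)]
  by_cases hoff : ∃ a b, E a b ∧ ReflTransGen E u a ∧ s(a, b) ≠ s(s, v) ∧ g s(a, b) < 0
  · obtain ⟨a, b, hab, hua, hf, hlt⟩ := hoff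
    rw [eq_of_isTie_update_of_neg hE hsu hsv huv hut h₁ hab hua (by rwa [update_of_ne hf]),
      eq_of_isTie_update_of_neg hE hsu hsv huv hut h₂ hab hua (by rwa [update_of_ne hf])]
  push Not at hoff
  have hxpos : 0 < g s(s, u) := (hoff s u hsu hus hne).lt_of_ne' hx
  have hnn : ∀ y, IsTie E (update g s(s, v) y) s t u v →
      NonnegReachable E (fun a b => update g s(s, v) y s(a, b)) u := by
    intro y h a b hab hua
    by_cases hf : s(a, b) = s(s, v)
    · by_contra! hlt
      have := eq_of_isTie_update_of_neg hE hsu hsv huv hut h hab hua hlt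
      simp only [hf, update_self] at hlt
      linarith
    · simpa [update_of_ne hf] using hoff a b hab hua hf
  rcases lt_trichotomy y₁ y₂ with hlt | heq | hgt
  · exact (false_of_isTie_update_of_lt hE hsu hsv huv hut (hnn y₁ h₁) hxpos hlt h₁ h₂).elim
  · exact heq
  · exact (false_of_isTie_update_of_lt hE hsu hsv huv hut (hnn y₂ h₂) hxpos hgt h₂ h₁).elim

end Ties

section Measurability

variable {V : Type*}

theorem measurable_walkCost (l : List V) : Measurable fun w : V → V → ℝ => walkCost w l := by
  induction l with
  | nil => exact measurable_const
  | cons a l ih =>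
    rcases l with _ | ⟨b, r⟩
    · exact measurable_const
    · exact (by fun_prop : Measurable fun w : V → V → ℝ => w a b).add ih

theorem measurable_gDist [Countable V] (E : V → V → Prop) (a t : V) :
    Measurable fun w : V → V → ℝ => gDist E w a t := by
  simp only [gDist, sInf_image']
  exact Measurable.iInf fun l => measurable_walkCost l.1

theorem measurableSet_isTie [Countable V] (E : V → V → Prop) (s t u v : V) :
    MeasurableSet {g : Sym2 V → ℝ | IsTie E g s t u v} := by
  have hw : Measurable fun (g : Sym2 V → ℝ) (a b : V) => g s(a, b) :=
    measurable_pi_lambda _ fun a => measurable_pi_lambda _ fun b => measurable_pi_apply _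
  exact measurableSet_eq_fun
    ((measurable_pi_apply _).add ((measurable_gDist E u t).comp hw))
    ((measurable_pi_apply _).add ((measurable_gDist E v t).comp hw))

end Measurability

namespace ProbabilityTheory

open Function

variable {Ω : Type*} [MeasurableSpace Ω] {μ : Measure Ω}

theorem IndepFun.measure_preimage_le_of_subsingleton [IsProbabilityMeasure μ] {α β : Type*}
    [MeasurableSpace α] [MeasurableSpace β] [MeasurableSingletonClass β] {X : Ω → α} {Y : Ω → β}
    (hXY : IndepFun X Y μ) (hX : Measurable X) (hY : Measurable Y) {B : Set (α × β)}
    (hB : MeasurableSet B) (hsec : ∀ x, (Prod.mk x ⁻¹' B).Subsingleton) {c : ℝ≥0∞}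
    (hc : ∀ y, μ (Y ⁻¹' {y}) ≤ c) : μ ((fun ω => (X ω, Y ω)) ⁻¹' B) ≤ c := by
  have := Measure.isProbabilityMeasure_map (μ := μ) hX.aemeasurable
  rw [← Measure.map_apply (hX.prodMk hY) hB,
    (indepFun_iff_map_prod_eq_prod_map_map hX.aemeasurable hY.aemeasurable).1 hXY,
    Measure.prod_apply hB]
  calc ∫⁻ x, μ.map Y (Prod.mk x ⁻¹' B) ∂μ.map X ≤ ∫⁻ _, c ∂μ.map X := lintegral_mono fun x => ?_
    _ = c := by simp
  rcases (hsec x).eq_empty_or_singleton with h | ⟨y, h⟩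
  · simp [h]
  · rw [h, Measure.map_apply hY (measurableSet_singleton y)]
    exact hc y

variable {ι β : Type*} [Fintype ι] [DecidableEq ι] [MeasurableSpace β] {f : ι → Ω → β}

theorem iIndepFun.indepFun_update (hf : iIndepFun f μ) (hmeas : ∀ i, Measurable (f i)) (i : ι)
    (b : β) : IndepFun (fun ω => update (fun j => f j ω) i b) (f i) μ := by
  have hφ : Measurable fun (x : ↥(Finset.univ.erase i) → β) (j : ι) =>
      if hj : j = i then b else x ⟨j, by simp [hj]⟩ := by
    refine measurable_pi_lambda _ fun j => ?_
    by_cases hj : j = i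
    · simp only [hj, dite_true]; exact measurable_const
    · simp only [hj, dite_false]; exact measurable_pi_apply _
  have hψ : Measurable fun x : ↥({i} : Finset ι) → β => x ⟨i, Finset.mem_singleton_self i⟩ :=
    measurable_pi_apply _
  convert (hf.indepFun_finset _ _ (by simp) hmeas).comp hφ hψ using 1
  · funext ω j
    by_cases hj : j = i
    · subst hj; simp
    · simp [hj]
  · rfl

theorem iIndepFun.measure_mem_le_of_subsingleton_update [IsProbabilityMeasure μ]
    [MeasurableSingletonClass β] [Nonempty β] (hf : iIndepFun f μ)
    (hmeas : ∀ i, Measurable (f i)) (i : ι) {T : Set (ι → β)} (hT : MeasurableSet T)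
    (hline : ∀ g, {y | update g i y ∈ T}.Subsingleton)
    {c : ℝ≥0∞} (hc : ∀ y, μ {ω | f i ω = y} ≤ c) : μ {ω | (fun j => f j ω) ∈ T} ≤ c := by
  obtain ⟨b⟩ := ‹Nonempty β›
  have hX : Measurable fun ω => update (fun j => f j ω) i b :=
    measurable_update'.comp ((measurable_pi_lambda _ hmeas).prodMk measurable_const)
  convert (hf.indepFun_update hmeas i b).measure_preimage_le_of_subsingleton hX (hmeas i)
    (measurable_update' hT) hline hc using 2
  ext ω
  simp

end ProbabilityTheory

theorem natCast_pow_mul_one_div_pow_succ_le (n k : ℕ) :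
    (n : ℝ≥0∞) ^ k * (1 / n ^ (k + 1)) ≤ 1 / n := by
  rcases eq_or_ne n 0 with rfl | hn
  · simp
  · have hn' : (n : ℝ≥0∞) ^ k ≠ 0 := pow_ne_zero _ (by simpa using hn)
    rw [pow_succ, one_div, one_div, ENNReal.mul_inv (.inl hn') (.inl (by simp)), ← mul_assoc,
      ENNReal.mul_inv_cancel hn' (by simp), one_mul]

/-- The diagonal slots `u = v` carry the events of a vanishing weight, which
`eq_of_isTie_update` has to exclude; this keeps the number of events at `n⁴`. -/
def badEvent {V Ω : Type*} [DecidableEq V] (E : V → V → Prop) (W : Sym2 V → Ω → ℝ)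
    (s t u v : V) : Set Ω :=
  if u = v then {ω | E s u ∧ W s(s, u) ω = 0}
  else {ω | E s u ∧ E s v ∧ IsTie E (fun e => W e ω) s t u v ∧ W s(s, u) ω ≠ 0}

theorem compl_subset_iUnion_badEvent {V Ω : Type*} [DecidableEq V] {E : V → V → Prop}
    {W : Sym2 V → Ω → ℝ} :
    {ω | ∀ s t u v : V, E s u → E s v → u ≠ v → ¬ IsTie E (fun e => W e ω) s t u v}ᶜ ⊆
      ⋃ q : V × V × V × V, badEvent E W q.1 q.2.1 q.2.2.1 q.2.2.2 := by
  intro ω hω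
  simp only [Set.mem_compl_iff, Set.mem_ofPred_eq, not_forall, not_not] at hω
  obtain ⟨s, t, u, v, hsu, hsv, huv, htie⟩ := hω
  by_cases h0 : W s(s, u) ω = 0
  · exact Set.mem_iUnion.2 ⟨(s, t, u, u), by simp [badEvent, hsu, h0]⟩
  · exact Set.mem_iUnion.2 ⟨(s, t, u, v), by simp [badEvent, huv, hsu, hsv, htie, h0]⟩

section Events

variable {V Ω : Type*} [Fintype V] [MeasurableSpace Ω] {μ : Measure Ω} [IsProbabilityMeasure μ]
  {E : V → V → Prop} {W : Sym2 V → Ω → ℝ}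

theorem measure_isTie_le (hE : ∀ a b, E a b → E b a) (hmeas : ∀ e, Measurable (W e))
    (hindep : iIndepFun W μ) {s t u v : V} (hsu : E s u) (hsv : E s v) (huv : u ≠ v)
    {c : ℝ≥0∞} (hc : ∀ y, μ {ω | W s(s, v) ω = y} ≤ c) :
    μ {ω | IsTie E (fun e => W e ω) s t u v ∧ W s(s, u) ω ≠ 0} ≤ c := by
  classical
  have hne : s(s, u) ≠ s(s, v) := fun h => huv (Sym2.congr_right.1 h)
  have hT : MeasurableSet {g : Sym2 V → ℝ | IsTie E g s t u v ∧ g s(s, u) ≠ 0} :=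
    (measurableSet_isTie E s t u v).inter
      ((measurable_pi_apply s(s, u)) (measurableSet_singleton 0)).compl
  refine hindep.measure_mem_le_of_subsingleton_update hmeas s(s, v) hT
    (fun g y₁ h₁ y₂ h₂ => eq_of_isTie_update hE hsu hsv huv ?_ h₁.1 h₂.1) hc
  simpa [Function.update_of_ne hne] using h₁.2

theorem measure_badEvent_le [DecidableEq V] (hE : ∀ a b, E a b → E b a)
    (hmeas : ∀ e, Measurable (W e)) (hindep : iIndepFun W μ) {c : ℝ≥0∞}
    (hc : ∀ a b, E a b → ∀ y, μ {ω | W s(a, b) ω = y} ≤ c)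
    (s t u v : V) : μ (badEvent E W s t u v) ≤ c := by
  unfold badEvent
  split_ifs with huv
  · by_cases hsu : E s u
    · exact (measure_mono fun ω hω => hω.2).trans (hc s u hsu 0)
    · simp [hsu]
  · by_cases hsu : E s u
    · by_cases hsv : E s v
      · exact (measure_mono fun ω hω => hω.2.2).trans
          (measure_isTie_le hE hmeas hindep hsu hsv huv (hc s v hsv))
      · simp [hsv]
    · simp [hsu]

end Events

theorem unique_shortest_path_whp_general {V : Type*} [Fintype V] (n : ℕ)
    (hcard : Fintype.card V = n)
    (E : V → V → Prop) (hEsymm : ∀ u v, E u v → E v u)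
    {Ω : Type*} [MeasurableSpace Ω] (μ : Measure Ω) [IsProbabilityMeasure μ]
    (W : Sym2 V → Ω → ℝ)
    (hmeas : ∀ e, Measurable (W e))
    (hindep : iIndepFun W μ)
    (hmass : ∀ u v : V, E u v → ∀ c : ℝ, μ {ω | W s(u, v) ω = c} ≤ (1 : ENNReal) / n ^ 5) :
    1 - (1 : ENNReal) / n ≤
      μ {ω | ∀ s t u v : V, E s u → E s v → u ≠ v →
        W s(s, u) ω + gDist E (fun a b => W s(a, b) ω) u t ≠
        W s(s, v) ω + gDist E (fun a b => W s(a, b) ω) v t} := by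
  classical
  let G := {ω | ∀ s t u v : V, E s u → E s v → u ≠ v → ¬ IsTie E (fun e => W e ω) s t u v}
  suffices h : 1 - 1 / (n : ℝ≥0∞) ≤ μ G from h
  have hbad : μ Gᶜ ≤ 1 / n :=
    calc μ Gᶜ ≤ μ (⋃ q : V × V × V × V, badEvent E W q.1 q.2.1 q.2.2.1 q.2.2.2) :=
          measure_mono compl_subset_iUnion_badEvent
      _ ≤ ∑ _q : V × V × V × V, (1 : ℝ≥0∞) / n ^ 5 :=
          (measure_iUnion_fintype_le _ _).trans (Finset.sum_le_sum fun q _ =>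
            measure_badEvent_le hEsymm hmeas hindep hmass _ _ _ _)
      _ = (n : ℝ≥0∞) ^ 4 * (1 / n ^ (4 + 1)) := by simp [hcard]; ring
      _ ≤ 1 / n := natCast_pow_mul_one_div_pow_succ_le n 4
  rw [tsub_le_iff_right]
  calc (1 : ℝ≥0∞) = μ (G ∪ Gᶜ) := by rw [Set.union_compl_self, measure_univ]
    _ ≤ μ G + μ Gᶜ := measure_union_le _ _
    _ ≤ μ G + 1 / n := add_le_add_right hbad _

/-- Union bound for unique shortest paths with random edge weights: if the (independent)
edge weights each have point masses at most `n⁻⁵`, then with probability at least `1 − 1/n`,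
no tie `w(s,u) + dist(u,t) = w(s,v) + dist(v,t)` occurs for distinct neighbors `u, v` of `s`. -/
theorem unique_shortest_path_whp {V : Type*} [Fintype V] (n : ℕ) (hn : 1 ≤ n)
    (hcard : Fintype.card V = n)
    (E : V → V → Prop) (hEsymm : ∀ u v, E u v → E v u)
    {Ω : Type*} [MeasurableSpace Ω] (μ : Measure Ω) [IsProbabilityMeasure μ]
    (W : Sym2 V → Ω → ℝ)
    (hmeas : ∀ e, Measurable (W e))
    (hindep : iIndepFun W μ)
    (hmass : ∀ u v : V, E u v → ∀ c : ℝ, μ {ω | W s(u, v) ω = c} ≤ (1 : ENNReal) / n ^ 5) :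
    1 - (1 : ENNReal) / n ≤
      μ {ω | ∀ s t u v : V, E s u → E s v → u ≠ v →
        W s(s, u) ω + gDist E (fun a b => W s(a, b) ω) u t ≠
        W s(s, v) ω + gDist E (fun a b => W s(a, b) ω) v t} :=
  unique_shortest_path_whp_general n hcard E hEsymm μ W hmeas hindep hmass
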